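/- arXiv:0807.4068 — 2 statements merged into one kernel-verified Lean document; each statement's English description precedes it below -/
import Mathlib

section
/- Let G be a connected graph on a countably infinite vertex set in which every vertex has degree exactly v (v ≥ 2). Then G is amenable if and only if the bottom of the spectrum of its combinatorial Laplacian vanishes; that is, h(G) = 0 if and only if μ₀(G) = 0. -/
/-!
Testing the Rayleigh quotient on the indicator of a finite set `F` gives `μ₀ ≤ v · #∂F / #F`:
every edge leaving `F` starts at a boundary vertex, which has at most `v` such edges. Hence
`μ₀ ≤ v · h`.

Conversely, peeling off the level sets of a finitely supported `g ≥ 0` one at a time gives the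
co-area inequality `h · ∑ g ≤ ½ ∑_{i ~ j} |g i - g j|`. For `g = f²` the right side is at most
`½ (∑_{i ~ j} (f i - f j)²)^{1/2} (∑_{i ~ j} (f i + f j)²)^{1/2}` by Cauchy–Schwarz, and the second
factor is at most `(4v ∑ f²)^{1/2}`; this is the Cheeger inequality `h² ≤ 2v · μ₀`.
-/

open Classical

/-- The combinatorial Dirichlet energy of `f` on the graph `G`:
the sum over edges `{i,j}` of `(f i - f j)^2`, written as half the sum over
ordered adjacent pairs. -/
noncomputable def edgeEnergy {V : Type} (G : SimpleGraph V) (f : V → ℝ) : ℝ :=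
  (1 / 2) * ∑' p : V × V, if G.Adj p.1 p.2 then (f p.1 - f p.2) ^ 2 else 0

/-- The squared `ℓ²`-norm of a function on the vertices. -/
noncomputable def vertexNormSq {V : Type} (f : V → ℝ) : ℝ := ∑' i : V, f i ^ 2

/-- The (inner vertex-)boundary of a set `F` of vertices: the vertices of `F`
adjacent to at least one vertex outside `F`. -/
def innerBoundary {V : Type} (G : SimpleGraph V) (F : Set V) : Set V :=
  {x ∈ F | ∃ y ∉ F, G.Adj x y}

/-- The Cheeger constant of `G`: the infimum over nonempty finite vertex sets `F`
of `#∂F / #F`. `G` is amenable when this constant vanishes. -/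
noncomputable def cheegerConst {V : Type} (G : SimpleGraph V) : ℝ :=
  sInf {r : ℝ | ∃ F : Finset V, F.Nonempty ∧
    r = (innerBoundary G (F : Set V)).ncard / F.card}

/-- The bottom of the spectrum of the combinatorial Laplacian on `G`:
the infimum of the Rayleigh quotients of finitely supported nonzero functions. -/
noncomputable def mu0 {V : Type} (G : SimpleGraph V) : ℝ :=
  sInf {r : ℝ | ∃ f : V → ℝ, (Function.support f).Finite ∧ f ≠ 0 ∧
    r = edgeEnergy G f / vertexNormSq f}

open Finset

theorem abs_sub_eq_mul_abs_indicator_sub_add {α : Type*} {s : Set α} {g : α → ℝ} {t : ℝ}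
    (ht : 0 ≤ t) (hgt : ∀ i ∈ s, t ≤ g i) (hg : ∀ i ∉ s, g i = 0) (i j : α) :
    |g i - g j| = t * |s.indicator 1 i - s.indicator 1 j| +
      |(g i - t * s.indicator 1 i) - (g j - t * s.indicator 1 j)| := by
  by_cases hi : i ∈ s <;> by_cases hj : j ∈ s
  · simp [hi, hj]
  · have := hgt i hi
    simp [hi, hj, hg j hj, abs_of_nonneg, ht.trans this, sub_nonneg.2 this]
  · have := hgt j hj
    simp [hi, hj, hg i hi, abs_of_nonneg, ht.trans this, abs_sub_comm t, sub_nonneg.2 this]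
  · simp [hi, hj, hg i hi, hg j hj]

theorem vertexNormSq_nonneg {V : Type} (f : V → ℝ) : 0 ≤ vertexNormSq f :=
  tsum_nonneg fun i => sq_nonneg (f i)

theorem vertexNormSq_pos {V : Type} {f : V → ℝ} (hf : (Function.support f).Finite)
    (hf0 : f ≠ 0) : 0 < vertexNormSq f := by
  obtain ⟨i, hi⟩ := Function.ne_iff.1 hf0
  have hsum : Summable fun i => f i ^ 2 :=
    summable_of_ne_finset_zero (s := hf.toFinset) fun i hi => by simp_all
  exact hsum.tsum_pos (fun i => sq_nonneg (f i)) i (pow_two_pos_of_ne_zero hi)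

theorem vertexNormSq_indicator_one {V : Type} (F : Finset V) :
    vertexNormSq ((F : Set V).indicator (1 : V → ℝ)) = #F := by
  rw [vertexNormSq, tsum_eq_sum (s := F) fun i hi => by simp [hi],
    sum_congr rfl fun i hi => by rw [Set.indicator_of_mem (mem_coe.2 hi)]]
  simp

theorem indicator_one_ne_zero {V : Type} {F : Finset V} (hF : F.Nonempty) :
    (F : Set V).indicator (1 : V → ℝ) ≠ 0 := fun h => by
  obtain ⟨x, hx⟩ := hF
  simpa [hx] using congrFun h x

namespace SimpleGraph

variable {V : Type} (G : SimpleGraph V)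

noncomputable def adjSum (φ : V → V → ℝ) : ℝ :=
  ∑' p : V × V, if G.Adj p.1 p.2 then φ p.1 p.2 else 0

theorem two_mul_edgeEnergy (f : V → ℝ) :
    2 * edgeEnergy G f = G.adjSum fun i j => (f i - f j) ^ 2 := by
  rw [edgeEnergy, adjSum]
  ring

theorem adjSum_nonneg {φ : V → V → ℝ} (hφ : ∀ i j, 0 ≤ φ i j) : 0 ≤ G.adjSum φ :=
  tsum_nonneg fun p => by split_ifs <;> simp [hφ]

theorem edgeEnergy_nonneg (f : V → ℝ) : 0 ≤ edgeEnergy G f := by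
  have := G.adjSum_nonneg fun i j => sq_nonneg (f i - f j)
  linarith [G.two_mul_edgeEnergy f]

theorem adjSum_mul_left (c : ℝ) (φ : V → V → ℝ) :
    (G.adjSum fun i j => c * φ i j) = c * G.adjSum φ := by
  simp only [adjSum, ← tsum_mul_left, mul_ite, mul_zero]

theorem adjSum_comm (φ : V → V → ℝ) : (G.adjSum fun i j => φ j i) = G.adjSum φ := by
  unfold adjSum
  rw [← (Equiv.prodComm V V).tsum_eq]
  simp [G.adj_comm]

theorem cheegerConst_nonneg : 0 ≤ cheegerConst G :=
  Real.sInf_nonneg <| by rintro _ ⟨F, -, rfl⟩; positivity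

theorem cheegerConst_mul_card_le {F : Finset V} (hF : F.Nonempty) :
    cheegerConst G * #F ≤ (innerBoundary G ↑F).ncard := by
  have hcard : (0 : ℝ) < #F := by exact_mod_cast hF.card_pos
  rw [← le_div_iff₀ hcard]
  exact csInf_le ⟨0, by rintro _ ⟨F, -, rfl⟩; positivity⟩ ⟨F, hF, rfl⟩

theorem mu0_nonneg : 0 ≤ mu0 G :=
  Real.sInf_nonneg <| by
    rintro _ ⟨f, -, -, rfl⟩
    exact div_nonneg (G.edgeEnergy_nonneg f) (vertexNormSq_nonneg f)

theorem mu0_le_div {f : V → ℝ} (hf : (Function.support f).Finite) (hf0 : f ≠ 0) :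
    mu0 G ≤ edgeEnergy G f / vertexNormSq f :=
  csInf_le ⟨0, by
    rintro _ ⟨f, -, -, rfl⟩
    exact div_nonneg (G.edgeEnergy_nonneg f) (vertexNormSq_nonneg f)⟩ ⟨f, hf, hf0, rfl⟩

section LocallyFinite

variable [G.LocallyFinite]

noncomputable def adjPairsMeeting (F : Finset V) : Finset (V × V) :=
  let N := F.biUnion fun x => G.neighborFinset x
  {p ∈ F ×ˢ N ∪ N ×ˢ F | G.Adj p.1 p.2}

variable {G} in
theorem mem_adjPairsMeeting {F : Finset V} {p : V × V} :
    p ∈ G.adjPairsMeeting F ↔ G.Adj p.1 p.2 ∧ (p.1 ∈ F ∨ p.2 ∈ F) := by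
  simp only [adjPairsMeeting, mem_filter, mem_union, mem_product,
    mem_biUnion, mem_neighborFinset]
  constructor
  · rintro ⟨h | h, hadj⟩ <;> tauto
  · rintro ⟨hadj, h | h⟩
    · exact ⟨.inl ⟨h, p.1, h, hadj⟩, hadj⟩
    · exact ⟨.inr ⟨⟨p.2, h, hadj.symm⟩, h⟩, hadj⟩

theorem adjSum_eq_sum (F : Finset V) {φ : V → V → ℝ}
    (hφ : ∀ i j, i ∉ F → j ∉ F → φ i j = 0) :
    G.adjSum φ = ∑ p ∈ G.adjPairsMeeting F, φ p.1 p.2 := by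
  rw [adjSum, tsum_eq_sum (s := G.adjPairsMeeting F)]
  · exact sum_congr rfl fun p hp => if_pos (mem_adjPairsMeeting.1 hp).1
  · intro p hp
    rw [mem_adjPairsMeeting, not_and, not_or] at hp
    split_ifs with hadj
    · exact hφ _ _ (hp hadj).1 (hp hadj).2
    · rfl

theorem adjSum_add (F : Finset V) {φ ψ : V → V → ℝ}
    (hφ : ∀ i j, i ∉ F → j ∉ F → φ i j = 0) (hψ : ∀ i j, i ∉ F → j ∉ F → ψ i j = 0) :
    (G.adjSum fun i j => φ i j + ψ i j) = G.adjSum φ + G.adjSum ψ := by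
  rw [G.adjSum_eq_sum F hφ, G.adjSum_eq_sum F hψ, G.adjSum_eq_sum F fun i j hi hj => by
    simp [hφ i j hi hj, hψ i j hi hj], sum_add_distrib]

theorem adjSum_mono (F : Finset V) {φ ψ : V → V → ℝ}
    (hφ : ∀ i j, i ∉ F → j ∉ F → φ i j = 0) (hψ : ∀ i j, i ∉ F → j ∉ F → ψ i j = 0)
    (h : ∀ i j, G.Adj i j → φ i j ≤ ψ i j) : G.adjSum φ ≤ G.adjSum ψ := by
  rw [G.adjSum_eq_sum F hφ, G.adjSum_eq_sum F hψ]
  exact sum_le_sum fun p hp => h _ _ (mem_adjPairsMeeting.1 hp).1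

theorem sq_adjSum_mul_le (F : Finset V) {φ ψ : V → V → ℝ}
    (hφ : ∀ i j, i ∉ F → j ∉ F → φ i j = 0) (hψ : ∀ i j, i ∉ F → j ∉ F → ψ i j = 0) :
    (G.adjSum fun i j => φ i j * ψ i j) ^ 2 ≤
      (G.adjSum fun i j => φ i j ^ 2) * G.adjSum fun i j => ψ i j ^ 2 := by
  rw [G.adjSum_eq_sum F fun i j hi hj => by simp [hφ i j hi hj],
    G.adjSum_eq_sum F fun i j hi hj => by simp [hφ i j hi hj],
    G.adjSum_eq_sum F fun i j hi hj => by simp [hψ i j hi hj]]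
  exact sum_mul_sq_le_sq_mul_sq _ _ _

theorem card_filter_fst_eq_le_degree {S : Finset (V × V)} (hS : ∀ p ∈ S, G.Adj p.1 p.2)
    (x : V) : #{p ∈ S | p.1 = x} ≤ G.degree x := by
  refine card_le_card_of_injOn Prod.snd (fun p hp => ?_) fun p hp q hq h => ?_
  · obtain ⟨hpS, rfl⟩ := mem_filter.1 hp
    exact (mem_neighborFinset _ _ _).2 (hS p hpS)
  · exact Prod.ext ((mem_filter.1 hp).2.trans (mem_filter.1 hq).2.symm) h

theorem adjSum_le_mul_tsum {d : ℕ} (hd : ∀ x, G.degree x ≤ d) (F : Finset V) {φ : V → ℝ}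
    (hφ : 0 ≤ φ) (hφF : ∀ i ∉ F, φ i = 0) :
    (G.adjSum fun i _ => φ i) ≤ d * ∑' i, φ i := by
  set S := G.adjPairsMeeting F
  rw [G.adjSum_eq_sum F fun i _ hi _ => hφF i hi, sum_comp]
  calc ∑ x ∈ S.image Prod.fst, #{p ∈ S | p.1 = x} • φ x
      ≤ ∑ x ∈ S.image Prod.fst, d * φ x := by
        refine sum_le_sum fun x _ => ?_
        rw [nsmul_eq_mul]
        gcongr
        · exact hφ x
        · exact_mod_cast (G.card_filter_fst_eq_le_degree
            (fun p hp => (mem_adjPairsMeeting.1 hp).1) x).trans (hd x)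
    _ ≤ d * ∑' i, φ i := by
        rw [← mul_sum]
        gcongr
        exact Summable.sum_le_tsum _ (fun i _ => hφ i) (summable_of_ne_finset_zero hφF)

noncomputable def edgeBoundary (F : Finset V) : Finset (V × V) :=
  {p ∈ G.adjPairsMeeting F | p.1 ∈ F ∧ p.2 ∉ F}

theorem innerBoundary_eq_image_fst (F : Finset V) :
    innerBoundary G ↑F = ↑((G.edgeBoundary F).image Prod.fst) := by
  ext x
  simp only [innerBoundary, edgeBoundary, coe_image, coe_filter, Set.mem_image,
    Set.mem_ofPred_eq, mem_adjPairsMeeting, Prod.exists, exists_and_right, exists_eq_right, mem_coe]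
  tauto

theorem ncard_innerBoundary_le_card_edgeBoundary (F : Finset V) :
    (innerBoundary G ↑F).ncard ≤ #(G.edgeBoundary F) := by
  rw [innerBoundary_eq_image_fst, Set.ncard_coe_finset]
  exact card_image_le

theorem card_edgeBoundary_le {d : ℕ} (hd : ∀ x, G.degree x ≤ d) (F : Finset V) :
    #(G.edgeBoundary F) ≤ d * (innerBoundary G ↑F).ncard := by
  rw [innerBoundary_eq_image_fst, Set.ncard_coe_finset]
  exact card_le_mul_card_image _ _ fun x _ => (G.card_filter_fst_eq_le_degree
    (fun p hp => (mem_adjPairsMeeting.1 (mem_filter.1 hp).1).1) x).trans (hd x)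

theorem adjSum_abs_indicator_sub (F : Finset V) :
    (G.adjSum fun i j => |(F : Set V).indicator 1 i - (F : Set V).indicator 1 j|) =
      2 * #(G.edgeBoundary F) := by
  set cross : V → V → ℝ := fun i j => if i ∈ F ∧ j ∉ F then 1 else 0
  have hcross : ∀ i j, i ∉ F → j ∉ F → cross i j = 0 := fun i j hi _ => by simp [cross, hi]
  have hsplit : (fun i j => |(F : Set V).indicator (1 : V → ℝ) i - (F : Set V).indicator 1 j|) =
      fun i j => cross i j + cross j i := by
    ext i j
    by_cases hi : i ∈ F <;> by_cases hj : j ∈ F <;> simp [cross, hi, hj]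
  have hcard : G.adjSum cross = #(G.edgeBoundary F) := by
    rw [G.adjSum_eq_sum F hcross, sum_boole, edgeBoundary]
  rw [hsplit, G.adjSum_add F hcross fun i j hi hj => hcross j i hj hi, G.adjSum_comm cross, hcard]
  ring

theorem cheegerConst_mul_sum_le_adjSum_abs_sub (F : Finset V) {g : V → ℝ} (hg : 0 ≤ g)
    (hgF : ∀ i ∉ F, g i = 0) :
    cheegerConst G * ∑ i ∈ F, g i ≤ 1 / 2 * G.adjSum fun i j => |g i - g j| := by
  -- Write `g = t • 1_F + g'` with `t = min_F g`; then `g'` vanishes off `F` minus a minimiser.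
  induction F using Finset.strongInduction generalizing g with
  | H F ih =>
  rcases F.eq_empty_or_nonempty with rfl | hF
  · simpa using G.adjSum_nonneg fun i j => abs_nonneg (g i - g j)
  obtain ⟨i₀, hi₀, hmin⟩ := F.exists_min_image g hF
  set t := g i₀
  set χ : V → ℝ := (F : Set V).indicator 1
  set g' : V → ℝ := fun i => g i - t * χ i
  have hg' : 0 ≤ g' := fun i => by
    by_cases hi : i ∈ F
    · simpa [g', χ, hi] using hmin i hi
    · simpa [g', χ, hi] using hg i
  have hg'F : ∀ i ∉ F.erase i₀, g' i = 0 := fun i hi => by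
    by_cases hiF : i ∈ F
    · obtain rfl : i = i₀ := by_contra fun h => hi (mem_erase_of_ne_of_mem h hiF)
      simp [g', χ, t, hiF]
    · simp [g', χ, hiF, hgF i hiF]
  have hsplit : (G.adjSum fun i j => |g i - g j|) =
      t * (G.adjSum fun i j => |χ i - χ j|) + G.adjSum fun i j => |g' i - g' j| := by
    rw [← adjSum_mul_left, ← G.adjSum_add F]
    · simp_rw [abs_sub_eq_mul_abs_indicator_sub_add (hg i₀) hmin hgF]
      rfl
    · intro i j hi hj; simp [χ, hi, hj]
    · intro i j hi hj
      simp [g', χ, hi, hj, hgF i hi, hgF j hj]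
  have hsum : ∑ i ∈ F, g i = t * #F + ∑ i ∈ F.erase i₀, g' i := by
    have hF : ∀ i ∈ F, g i = t + g' i := fun i hi => by simp [g', χ, hi]
    rw [sum_erase F (hg'F i₀ (notMem_erase i₀ F)), sum_congr rfl hF, sum_add_distrib, sum_const,
      nsmul_eq_mul, mul_comm]
  have hIH := ih (F.erase i₀) (erase_ssubset hi₀) hg' hg'F
  have hbdry : cheegerConst G * #F ≤ #(G.edgeBoundary F) :=
    (G.cheegerConst_mul_card_le hF).trans <| by
      exact_mod_cast G.ncard_innerBoundary_le_card_edgeBoundary F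
  rw [hsplit, G.adjSum_abs_indicator_sub F, hsum]
  linarith [mul_le_mul_of_nonneg_left hbdry (hg i₀)]

theorem adjSum_add_sq_le {d : ℕ} (hd : ∀ x, G.degree x ≤ d) {f : V → ℝ}
    (hf : (Function.support f).Finite) :
    (G.adjSum fun i j => (f i + f j) ^ 2) ≤ 4 * d * vertexNormSq f := by
  set F := hf.toFinset
  have hfF : ∀ i ∉ F, f i = 0 := fun i hi => by simpa [F] using hi
  calc _ ≤ G.adjSum fun i j => 2 * f i ^ 2 + 2 * f j ^ 2 :=
        G.adjSum_mono F (fun i j hi hj => by simp [hfF i hi, hfF j hj])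
          (fun i j hi hj => by simp [hfF i hi, hfF j hj])
          fun i j _ => by nlinarith [sq_nonneg (f i - f j)]
    _ = 2 * 2 * G.adjSum fun i _ => f i ^ 2 := by
        rw [G.adjSum_add F (fun i j hi _ => by simp [hfF i hi]) fun i j _ hj => by simp [hfF j hj],
          G.adjSum_comm fun i _ => 2 * f i ^ 2, adjSum_mul_left]
        ring
    _ ≤ 2 * 2 * (d * vertexNormSq f) := by
        gcongr
        exact G.adjSum_le_mul_tsum hd F (fun i => sq_nonneg (f i)) fun i hi => by simp [hfF i hi]
    _ = 4 * d * vertexNormSq f := by ring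

theorem sq_cheegerConst_mul_vertexNormSq_le {d : ℕ} (hd : ∀ x, G.degree x ≤ d) {f : V → ℝ}
    (hf : (Function.support f).Finite) :
    cheegerConst G ^ 2 * vertexNormSq f ≤ 2 * d * edgeEnergy G f := by
  set F := hf.toFinset
  have hfF : ∀ i ∉ F, f i = 0 := fun i hi => by simpa [F] using hi
  set N := vertexNormSq f
  set E := edgeEnergy G f
  have hN : ∑ i ∈ F, f i ^ 2 = N := (tsum_eq_sum fun i hi => by simp [hfF i hi]).symm
  have hcoarea := G.cheegerConst_mul_sum_le_adjSum_abs_sub F (g := fun i => f i ^ 2)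
    (fun i => sq_nonneg (f i)) fun i hi => by simp [hfF i hi]
  have hCS : (G.adjSum fun i j => |f i ^ 2 - f j ^ 2|) ^ 2 ≤ 2 * E * (4 * d * N) := calc
    _ = (G.adjSum fun i j => |f i - f j| * |f i + f j|) ^ 2 := by
        simp_rw [sq_sub_sq, mul_comm (f _ + f _), abs_mul]
    _ ≤ (G.adjSum fun i j => |f i - f j| ^ 2) * G.adjSum fun i j => |f i + f j| ^ 2 :=
        G.sq_adjSum_mul_le F (fun i j hi hj => by simp [hfF i hi, hfF j hj])
          fun i j hi hj => by simp [hfF i hi, hfF j hj]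
    _ ≤ 2 * E * (4 * d * N) := by
        simp_rw [sq_abs, E, two_mul_edgeEnergy]
        exact mul_le_mul_of_nonneg_left (G.adjSum_add_sq_le hd hf)
          (G.adjSum_nonneg fun i j => sq_nonneg _)
  rw [hN] at hcoarea
  have hN0 : 0 ≤ N := vertexNormSq_nonneg f
  have hE0 : 0 ≤ E := G.edgeEnergy_nonneg f
  have hsq : (cheegerConst G * N) ^ 2 ≤ 2 * d * E * N := by
    nlinarith [pow_le_pow_left₀ (mul_nonneg G.cheegerConst_nonneg hN0) hcoarea 2]
  rcases hN0.eq_or_lt with hN0 | hNpos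
  · rw [← hN0, mul_zero]
    positivity
  · exact le_of_mul_le_mul_right (by nlinarith) hNpos

theorem edgeEnergy_indicator_one (F : Finset V) :
    edgeEnergy G ((F : Set V).indicator 1) = #(G.edgeBoundary F) := by
  set χ : V → ℝ := (F : Set V).indicator 1
  have hsq : (fun i j => (χ i - χ j) ^ 2) = fun i j => |χ i - χ j| := by
    ext i j
    by_cases hi : i ∈ F <;> by_cases hj : j ∈ F <;> simp [χ, hi, hj]
  have := G.two_mul_edgeEnergy χ
  rw [hsq, G.adjSum_abs_indicator_sub F] at this
  linarith

theorem mu0_le_mul_cheegerConst [Nonempty V] {d : ℕ} (hd : ∀ x, G.degree x ≤ d) :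
    mu0 G ≤ d * cheegerConst G := by
  rw [cheegerConst, ← smul_eq_mul, ← Real.sInf_smul_of_nonneg (Nat.cast_nonneg d)]
  obtain ⟨x⟩ := ‹Nonempty V›
  refine le_csInf ⟨_, Set.smul_mem_smul_set ⟨{x}, singleton_nonempty x, rfl⟩⟩ ?_
  rintro _ ⟨_, ⟨F, hF, rfl⟩, rfl⟩
  have hcard : (0 : ℝ) < #F := by exact_mod_cast hF.card_pos
  calc mu0 G ≤ edgeEnergy G ((F : Set V).indicator 1) / vertexNormSq ((F : Set V).indicator 1) :=
        G.mu0_le_div (F.finite_toSet.subset Set.support_indicator_subset) (indicator_one_ne_zero hF)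
    _ = #(G.edgeBoundary F) / #F := by rw [edgeEnergy_indicator_one, vertexNormSq_indicator_one]
    _ ≤ d * (innerBoundary G ↑F).ncard / #F := by
        gcongr
        exact_mod_cast G.card_edgeBoundary_le hd F
    _ = (d : ℝ) • ((innerBoundary G ↑F).ncard / #F) := by rw [smul_eq_mul, mul_div_assoc]

theorem sq_cheegerConst_le [Nonempty V] {d : ℕ} (hd : ∀ x, G.degree x ≤ d) :
    cheegerConst G ^ 2 ≤ 2 * d * mu0 G := by
  rw [mu0, ← smul_eq_mul, ← Real.sInf_smul_of_nonneg (by positivity)]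
  obtain ⟨x⟩ := ‹Nonempty V›
  refine le_csInf ⟨_, Set.smul_mem_smul_set ⟨_, ({x} : Finset V).finite_toSet.subset
    Set.support_indicator_subset, indicator_one_ne_zero (singleton_nonempty x), rfl⟩⟩ ?_
  rintro _ ⟨_, ⟨f, hf, hf0, rfl⟩, rfl⟩
  show cheegerConst G ^ 2 ≤ 2 * d * (edgeEnergy G f / vertexNormSq f)
  rw [← mul_div_assoc, le_div_iff₀ (vertexNormSq_pos hf hf0)]
  exact G.sq_cheegerConst_mul_vertexNormSq_le hd hf

end LocallyFinite

end SimpleGraph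

theorem amenable_iff_mu0_eq_zero_general (V : Type) [Infinite V]
    (G : SimpleGraph V) (v : ℕ) (hv : 2 ≤ v)
    (hdeg : ∀ x : V, (G.neighborSet x).ncard = v) :
    cheegerConst G = 0 ↔ mu0 G = 0 := by
  have hfin (x : V) : (G.neighborSet x).Finite :=
    Set.finite_of_ncard_ne_zero (by rw [hdeg x]; omega)
  let : G.LocallyFinite := fun x => (hfin x).fintype
  have hd (x : V) : G.degree x ≤ v := (hdeg x ▸ (Set.ncard_eq_toFinset_card' _)).ge
  constructor
  · intro h
    refine le_antisymm ?_ G.mu0_nonneg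
    simpa [h] using G.mu0_le_mul_cheegerConst hd
  · intro h
    have := G.sq_cheegerConst_le hd
    rw [h, mul_zero] at this
    exact pow_eq_zero_iff two_ne_zero |>.1 (le_antisymm this (sq_nonneg _))

theorem amenable_iff_mu0_eq_zero (V : Type) [Countable V] [Infinite V]
    (G : SimpleGraph V) (hconn : G.Connected) (v : ℕ) (hv : 2 ≤ v)
    (hdeg : ∀ x : V, (G.neighborSet x).ncard = v) :
    cheegerConst G = 0 ↔ mu0 G = 0 :=
  amenable_iff_mu0_eq_zero_general V G v hv hdeg
end

section
/- Let R > 0 and let P, Q be real numbers. For every function g : ℝ → ℝ that is continuously differentiable on [0, R] with g(0) = P and g(R) = Q, one has ∫₀^R g'(r)² cosh(r) dr ≥ (P − Q)²/(2·arctan(e^R) − π/2). -/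
/-! Weighted Cauchy–Schwarz: `(∫ g')² = (∫ g' √cosh · (√cosh)⁻¹)² ≤ (∫ g'² cosh) · (∫ sech)`, and
`2 arctan (eᴿ) - π/2` is exactly `∫₀ᴿ sech`, because `2 arctan ∘ exp` is an antiderivative
of `sech`. -/

open Real MeasureTheory

namespace intervalIntegral

variable {a b : ℝ} {f w : ℝ → ℝ}

/-- With `x / 0 = 0` the degenerate case `∫ w⁻¹ = 0` reads `0 ≤ ∫ f² w`. -/
theorem sq_integral_div_integral_inv_le (hab : a ≤ b) (hw : ∀ x ∈ Set.Icc a b, 0 < w x)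
    (hf : IntervalIntegrable f volume a b)
    (hw_inv : IntervalIntegrable (fun x => (w x)⁻¹) volume a b)
    (hfw : IntervalIntegrable (fun x => f x ^ 2 * w x) volume a b) :
    (∫ x in a..b, f x) ^ 2 / (∫ x in a..b, (w x)⁻¹) ≤ ∫ x in a..b, f x ^ 2 * w x := by
  set S := ∫ x in a..b, (w x)⁻¹
  set F := ∫ x in a..b, f x
  have hS : 0 ≤ S := integral_nonneg hab fun x hx => (inv_pos.2 (hw x hx)).le
  rcases hS.eq_or_lt with hS0 | hSpos
  · rw [← hS0, div_zero]
    exact integral_nonneg hab fun x hx => mul_nonneg (sq_nonneg _) (hw x hx).le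
  -- Integrate `2 t f - t² / w ≤ f² w`, i.e. `0 ≤ (f w - t)² / w`, at the optimal `t = F / S`.
  set t := F / S
  have hpointwise : ∀ x ∈ Set.Icc a b, 2 * t * f x - t ^ 2 * (w x)⁻¹ ≤ f x ^ 2 * w x := by
    intro x hx
    have hwx := hw x hx
    have hsq : 0 ≤ (f x * w x - t) ^ 2 / w x := by positivity
    have hexpand : (f x * w x - t) ^ 2 / w x
        = f x ^ 2 * w x - (2 * t * f x - t ^ 2 * (w x)⁻¹) := by
      field_simp
      ring
    linarith
  have hlin : ∫ x in a..b, (2 * t * f x - t ^ 2 * (w x)⁻¹) = 2 * t * F - t ^ 2 * S := by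
    rw [integral_sub (hf.const_mul _) (hw_inv.const_mul _), integral_const_mul,
      integral_const_mul]
  calc F ^ 2 / S = 2 * t * F - t ^ 2 * S := by simp only [t]; field_simp; ring
    _ = ∫ x in a..b, (2 * t * f x - t ^ 2 * (w x)⁻¹) := hlin.symm
    _ ≤ ∫ x in a..b, f x ^ 2 * w x :=
      integral_mono_on hab ((hf.const_mul _).sub (hw_inv.const_mul _)) hfw hpointwise

end intervalIntegral

theorem Real.hasDerivAt_two_mul_arctan_exp (x : ℝ) :
    HasDerivAt (fun y => 2 * arctan (exp y)) (cosh x)⁻¹ x := by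
  refine (((hasDerivAt_arctan _).comp x (hasDerivAt_exp x)).const_mul 2).congr_deriv ?_
  rw [cosh_eq, exp_neg]
  field_simp
  ring

theorem Real.continuous_cosh_inv : Continuous fun x => (cosh x)⁻¹ :=
  continuous_cosh.inv₀ fun x => (cosh_pos x).ne'

theorem Real.integral_cosh_inv (a b : ℝ) :
    ∫ x in a..b, (cosh x)⁻¹ = 2 * arctan (exp b) - 2 * arctan (exp a) :=
  intervalIntegral.integral_eq_sub_of_hasDerivAt (fun x _ => hasDerivAt_two_mul_arctan_exp x)
    (continuous_cosh_inv.intervalIntegrable a b)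

/-- Lower bound for the weighted radial Dirichlet energy of a continuously
differentiable function on `[0, R]` with boundary values `P` and `Q`:
`∫₀^R g'(r)² cosh r dr ≥ (P - Q)² / (2 arctan (e^R) - π/2)`. -/
theorem radial_energy_lower_bound (R P Q : ℝ) (hR : 0 < R) (g g' : ℝ → ℝ)
    (hg : ∀ r ∈ Set.Icc (0:ℝ) R, HasDerivAt g (g' r) r)
    (hg' : ContinuousOn g' (Set.Icc 0 R))
    (h0 : g 0 = P) (hRQ : g R = Q) :
    (P - Q) ^ 2 / (2 * Real.arctan (Real.exp R) - Real.pi / 2) ≤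
      ∫ r in (0:ℝ)..R, (g' r) ^ 2 * Real.cosh r := by
  have hIcc : Set.uIcc 0 R = Set.Icc 0 R := Set.uIcc_of_le hR.le
  have hg'_int : IntervalIntegrable g' volume 0 R := (hIcc ▸ hg').intervalIntegrable
  have hftc : ∫ r in (0:ℝ)..R, g' r = Q - P := by
    rw [intervalIntegral.integral_eq_sub_of_hasDerivAt (fun r hr => hg r (hIcc ▸ hr)) hg'_int,
      h0, hRQ]
  have hsech : ∫ r in (0:ℝ)..R, (cosh r)⁻¹ = 2 * arctan (exp R) - π / 2 := by
    rw [integral_cosh_inv, exp_zero, arctan_one]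
    ring
  have hbound := intervalIntegral.sq_integral_div_integral_inv_le hR.le
    (fun r _ => cosh_pos r) hg'_int (continuous_cosh_inv.intervalIntegrable 0 R)
    ((hIcc ▸ (hg'.pow 2).mul continuous_cosh.continuousOn).intervalIntegrable)
  rwa [hftc, hsech, ← neg_sub, neg_sq] at hbound
end
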